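/- (Deligne's twisting formula) Let α, β be characters of F^× with a(α) ≥ 2·a(β), ψ a nontrivial additive character of F, and c ∈ F^× with ν_F(c) = a(α)+n(ψ) satisfying α(1+x) = ψ(x/c) for all x with ν_F(x) ≥ a(α)/2. Then ε(αβ, ψ) = β(c)·ε(α, ψ). -/

import Mathlib

open scoped BigOperators

/-- Valuation data for a non-Archimedean local field `F`:
a surjective discrete valuation `ν` (recorded via a uniformizer `π` of valuation 1),
and the residue cardinality `q`. -/
structure VData (F : Type) [Field F] where
  ν : F → ℤ
  π : F
  hπ0 : π ≠ 0
  hπ1 : ν π = 1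
  hmul : ∀ x y : F, x ≠ 0 → y ≠ 0 → ν (x * y) = ν x + ν y
  hadd : ∀ x y : F, x ≠ 0 → y ≠ 0 → x + y ≠ 0 → min (ν x) (ν y) ≤ ν (x + y)
  q : ℕ
  hq : 1 < q

variable {F : Type} [Field F]

/-- The fractional ideal `P_F^k = {x : ν x ≥ k}`. -/
def Pid (V : VData F) (k : ℤ) : Set F := {x | x = 0 ∨ k ≤ V.ν x}

/-- The unit group `O_F^× = {x ≠ 0 : ν x = 0}`. -/
def Uni (V : VData F) : Set F := {x | x ≠ 0 ∧ V.ν x = 0}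

/-- `χ : F → ℂ` is a multiplicative character of `F^×`. -/
def IsMulChar (χ : F → ℂ) : Prop :=
  (∀ x : F, x ≠ 0 → χ x ≠ 0) ∧ ∀ x y : F, x ≠ 0 → y ≠ 0 → χ (x * y) = χ x * χ y

/-- `χ` is trivial on `U_F^a` (with `U_F^0 = O_F^×`, and `U_F^a = 1 + P_F^a` for `a ≥ 1`). -/
def TrivOn (V : VData F) (χ : F → ℂ) (a : ℤ) : Prop :=
  if a ≤ 0 then ∀ x ∈ Uni V, χ x = 1 else ∀ y ∈ Pid V a, χ (1 + y) = 1

/-- `a` is the conductor `a(χ)`: the smallest integer `≥ 0` with `χ` trivial on `U_F^a`. -/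
def IsMulConductor (V : VData F) (χ : F → ℂ) (a : ℤ) : Prop :=
  0 ≤ a ∧ TrivOn V χ a ∧ ∀ b : ℤ, 0 ≤ b → TrivOn V χ b → a ≤ b

/-- `ψ : F → ℂ` is a nontrivial additive character of `F`. -/
def IsAddChar (ψ : F → ℂ) : Prop :=
  (∀ x y : F, ψ (x + y) = ψ x * ψ y) ∧ ∃ x : F, ψ x ≠ 1

/-- `n` is the conductor `n(ψ)`: `ψ` is trivial on `P_F^{-n}` but not on `P_F^{-n-1}`. -/
def IsAddConductor (V : VData F) (ψ : F → ℂ) (n : ℤ) : Prop :=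
  (∀ x ∈ Pid V (-n), ψ x = 1) ∧ ∃ x ∈ Pid V (-n - 1), ψ x ≠ 1

/-- `S` is a (finite) set of coset representatives for `(1 + P_F^m)/(1 + P_F^k)`. -/
def MulReps (V : VData F) (m k : ℤ) (S : Finset F) : Prop :=
  (∀ s ∈ S, s - 1 ∈ Pid V m) ∧
    ∀ x : F, x - 1 ∈ Pid V m → ∃! s, s ∈ S ∧ x * s⁻¹ - 1 ∈ Pid V k

/-- `T` is a set of coset representatives for `O_F^×/(1 + P_F^k)`. -/
def UnitReps (V : VData F) (k : ℤ) (T : Finset F) : Prop :=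
  (∀ t ∈ T, t ∈ Uni V) ∧ ∀ x ∈ Uni V, ∃! t, t ∈ T ∧ x * t⁻¹ - 1 ∈ Pid V k

/-- `Y` is a set of coset representatives for the additive quotient `P_F^j/P_F^k`. -/
def AddReps (V : VData F) (j k : ℤ) (Y : Finset F) : Prop :=
  (∀ y ∈ Y, y ∈ Pid V j) ∧ ∀ x ∈ Pid V j, ∃! y, y ∈ Y ∧ x - y ∈ Pid V k

/-! The difference of the two Tate sums is `∑_{x ∈ T} f x` with
`f x = α(x)⁻¹ (β(x)⁻¹ - 1) ψ(x/c)`, a function on `O_F^×/U_F^a`. Put `M = a - ⌊a/2⌋`.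
For `u ∈ U_F^M` we have `α(u) = ψ((u-1)/c)` and `β(u) = 1`, hence
`f(xu) = f(x) ψ((x-1)(u-1)/c)`. Averaging over representatives `u` of `U_F^M/U_F^a` thus
multiplies `f(x)` by the sum of the character `u ↦ ψ((x-1)(u-1)/c)` of `U_F^M/U_F^a`, which
vanishes unless `x ∈ U_F^{⌊a/2⌋} ⊆ U_F^{a(β)}`; and there `β(x) = 1`, so `f(x) = 0`. -/

namespace VData

variable (V : VData F)

theorem ν_one : V.ν 1 = 0 := by
  have h := V.hmul 1 1 one_ne_zero one_ne_zero
  rw [mul_one] at h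
  omega

theorem ν_neg {x : F} (hx : x ≠ 0) : V.ν (-x) = V.ν x := by
  have h := V.hmul (-1) (-1) (by norm_num) (by norm_num)
  rw [neg_mul_neg, one_mul, V.ν_one] at h
  rw [← neg_one_mul, V.hmul (-1) x (by norm_num) hx]
  omega

theorem ν_inv {x : F} (hx : x ≠ 0) : V.ν x⁻¹ = -V.ν x := by
  have h := V.hmul x x⁻¹ hx (inv_ne_zero hx)
  rw [mul_inv_cancel₀ hx, V.ν_one] at h
  omega

end VData

namespace Pid

variable {V : VData F}

theorem zero_mem (k : ℤ) : (0 : F) ∈ Pid V k := Or.inl rfl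

theorem self_mem (x : F) : x ∈ Pid V (V.ν x) := Or.inr le_rfl

theorem anti {k l : ℤ} (h : k ≤ l) : Pid V l ⊆ Pid V k :=
  fun _ hx => hx.imp id h.trans

theorem add_mem {k : ℤ} {x y : F} (hx : x ∈ Pid V k) (hy : y ∈ Pid V k) :
    x + y ∈ Pid V k := by
  by_cases hx0 : x = 0
  · simpa [hx0] using hy
  by_cases hy0 : y = 0
  · simpa [hy0] using hx
  by_cases hxy : x + y = 0
  · exact Or.inl hxy
  exact Or.inr <| (le_min (hx.resolve_left hx0) (hy.resolve_left hy0)).trans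
    (V.hadd x y hx0 hy0 hxy)

theorem neg_mem {k : ℤ} {x : F} (hx : x ∈ Pid V k) : -x ∈ Pid V k := by
  by_cases hx0 : x = 0
  · simp [hx0, zero_mem]
  · exact Or.inr (V.ν_neg hx0 ▸ hx.resolve_left hx0)

theorem sub_mem {k : ℤ} {x y : F} (hx : x ∈ Pid V k) (hy : y ∈ Pid V k) :
    x - y ∈ Pid V k :=
  sub_eq_add_neg x y ▸ add_mem hx (neg_mem hy)

theorem mul_mem {k l : ℤ} {x y : F} (hx : x ∈ Pid V k) (hy : y ∈ Pid V l) :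
    x * y ∈ Pid V (k + l) := by
  by_cases hx0 : x = 0
  · simp [hx0, zero_mem]
  by_cases hy0 : y = 0
  · simp [hy0, zero_mem]
  exact Or.inr (V.hmul x y hx0 hy0 ▸ add_le_add (hx.resolve_left hx0) (hy.resolve_left hy0))

theorem unit_mul_mem {k : ℤ} {u x : F} (hu : u ∈ Uni V) (hx : x ∈ Pid V k) :
    u * x ∈ Pid V k := by
  simpa using mul_mem (show u ∈ Pid V 0 from Or.inr hu.2.ge) hx

end Pid

namespace Uni

variable {V : VData F}

theorem one_mem : (1 : F) ∈ Uni V := ⟨one_ne_zero, V.ν_one⟩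

theorem mul_mem {x y : F} (hx : x ∈ Uni V) (hy : y ∈ Uni V) : x * y ∈ Uni V :=
  ⟨mul_ne_zero hx.1 hy.1, by rw [V.hmul x y hx.1 hy.1, hx.2, hy.2, add_zero]⟩

theorem inv_mem {x : F} (hx : x ∈ Uni V) : x⁻¹ ∈ Uni V :=
  ⟨inv_ne_zero hx.1, by rw [V.ν_inv hx.1, hx.2, neg_zero]⟩

theorem sub_one_mem {x : F} (hx : x ∈ Uni V) : x - 1 ∈ Pid V 0 :=
  Pid.sub_mem (Or.inr hx.2.ge) (Or.inr V.ν_one.ge)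

theorem of_sub_one_mem {k : ℤ} (hk : 1 ≤ k) {x : F} (hx : x - 1 ∈ Pid V k) : x ∈ Uni V := by
  have hx0 : x ≠ 0 := by
    rintro rfl
    have h := hx.resolve_left (by norm_num)
    rw [zero_sub, V.ν_neg one_ne_zero, V.ν_one] at h
    omega
  by_cases h1 : x - 1 = 0
  · exact sub_eq_zero.mp h1 ▸ one_mem
  have hν := hx.resolve_left h1
  have hge := V.hadd 1 (x - 1) one_ne_zero h1 (by simpa using hx0)
  have hle := V.hadd x (-(x - 1)) hx0 (neg_ne_zero.mpr h1) (by simp)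
  rw [add_sub_cancel] at hge
  rw [show x + -(x - 1) = 1 by ring, V.ν_one, V.ν_neg h1] at hle
  rw [V.ν_one] at hge
  exact ⟨hx0, by omega⟩

end Uni

namespace Pid

variable {V : VData F}

theorem inv_sub_one_mem {k : ℤ} (hk : 1 ≤ k) {x : F} (hx : x - 1 ∈ Pid V k) :
    x⁻¹ - 1 ∈ Pid V k := by
  have hu := Uni.of_sub_one_mem hk hx
  rw [show x⁻¹ - 1 = x⁻¹ * -(x - 1) by field_simp [hu.1]; ring]
  exact unit_mul_mem (Uni.inv_mem hu) (neg_mem hx)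

theorem mul_sub_one_mem_iff {k : ℤ} {x w : F} (hx : x ∈ Uni V)
    (hw : w - 1 ∈ Pid V k) : x * w - 1 ∈ Pid V k ↔ x - 1 ∈ Pid V k := by
  have hxw := unit_mul_mem hx hw
  rw [show x * w - 1 = (x - 1) + x * (w - 1) by ring]
  exact ⟨fun h => by simpa using sub_mem h hxw, fun h => add_mem h hxw⟩

end Pid

theorem IsMulChar.map_one {χ : F → ℂ} (hχ : IsMulChar χ) : χ 1 = 1 := by
  have h := hχ.2 1 1 one_ne_zero one_ne_zero
  rw [mul_one] at h
  exact (mul_eq_left₀ (hχ.1 1 one_ne_zero)).mp h.symm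

theorem IsMulConductor.apply_eq_one {V : VData F} {χ : F → ℂ} {a : ℤ}
    (h : IsMulConductor V χ a) {x : F} (hx : x ∈ Uni V) (hx1 : x - 1 ∈ Pid V a) : χ x = 1 := by
  have htriv := h.2.1
  unfold TrivOn at htriv
  split_ifs at htriv
  · exact htriv x hx
  · simpa using htriv (x - 1) hx1

section AddChar

variable {V : VData F} {ψ : F → ℂ} {n : ℤ}

theorem IsAddConductor.apply_zero (hn : IsAddConductor V ψ n) : ψ 0 = 1 :=
  hn.1 0 (Pid.zero_mem _)

theorem IsAddConductor.apply_ne_zero (hn : IsAddConductor V ψ n)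
    (hψ : ∀ x y, ψ (x + y) = ψ x * ψ y) (x : F) : ψ x ≠ 0 := by
  intro h
  have h0 := hψ x (-x)
  rw [add_neg_cancel, hn.apply_zero, h, zero_mul] at h0
  exact one_ne_zero h0

theorem IsAddConductor.exists_mul_ne_one (hn : IsAddConductor V ψ n) {z : F} (hz : z ≠ 0) :
    ∃ y ∈ Pid V (-n - 1 - V.ν z), ψ (z * y) ≠ 1 := by
  obtain ⟨x₀, hx₀, hψx₀⟩ := hn.2
  refine ⟨z⁻¹ * x₀, ?_, by rwa [mul_inv_cancel_left₀ hz]⟩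
  have h := Pid.mul_mem (Pid.self_mem z⁻¹) hx₀
  rwa [V.ν_inv hz, neg_add_eq_sub] at h

end AddChar

namespace UnitReps

variable {V : VData F} {k : ℤ} {T : Finset F}

theorem sum_mul_right (hT : UnitReps V k T) (hk : 1 ≤ k) {f : F → ℂ}
    (hf : ∀ x ∈ Uni V, ∀ v, v - 1 ∈ Pid V k → f (x * v) = f x) {u : F} (hu : u ∈ Uni V) :
    ∑ x ∈ T, f (x * u) = ∑ x ∈ T, f x := by
  choose! r hr hr_unique using hT.2
  have hr_mul : ∀ w ∈ Uni V, ∀ x ∈ T, r (x * w) ∈ T ∧ x * w * (r (x * w))⁻¹ - 1 ∈ Pid V k :=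
    fun w hw x hx => hr _ (Uni.mul_mem (hT.1 x hx) hw)
  have hr_back : ∀ w ∈ Uni V, ∀ x ∈ T, r (r (x * w) * w⁻¹) = x := by
    intro w hw x hx
    obtain ⟨hrT, hrel⟩ := hr_mul w hw x hx
    refine (hr_unique _ (Uni.mul_mem (hT.1 _ hrT) (Uni.inv_mem hw)) x ⟨hx, ?_⟩).symm
    convert Pid.inv_sub_one_mem hk hrel using 2
    field_simp [(hT.1 x hx).1, hw.1]
  refine Finset.sum_nbij' (fun x => r (x * u)) (fun x => r (x * u⁻¹))
    (fun x hx => (hr_mul u hu x hx).1) (fun x hx => (hr_mul _ (Uni.inv_mem hu) x hx).1)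
    (hr_back u hu) (fun x hx => by simpa using hr_back _ (Uni.inv_mem hu) x hx) ?_
  intro x hx
  obtain ⟨hrT, hrel⟩ := hr_mul u hu x hx
  have hr0 := (hT.1 _ hrT).1
  have h := hf _ (hT.1 _ hrT) _ hrel
  rwa [mul_comm (x * u), mul_inv_cancel_left₀ hr0] at h

theorem sum_eq_zero_of_apply_mul (hT : UnitReps V k T) (hk : 1 ≤ k) {f : F → ℂ}
    (hf : ∀ x ∈ Uni V, ∀ v, v - 1 ∈ Pid V k → f (x * v) = f x) {u : F} (hu : u ∈ Uni V)
    {c : ℂ} (hc : c ≠ 1) (hfu : ∀ x ∈ Uni V, f (x * u) = c * f x) :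
    ∑ x ∈ T, f x = 0 := by
  have h := hT.sum_mul_right hk hf hu
  rw [Finset.sum_congr rfl fun x hx => hfu x (hT.1 x hx), ← Finset.mul_sum] at h
  by_contra h0
  exact hc ((mul_eq_right₀ h0).mp h)

theorem card_mul_sum (hT : UnitReps V k T) (hk : 1 ≤ k) {f : F → ℂ}
    (hf : ∀ x ∈ Uni V, ∀ v, v - 1 ∈ Pid V k → f (x * v) = f x) {S : Finset F}
    (hS : ∀ u ∈ S, u ∈ Uni V) {e : F → F → ℂ}
    (he : ∀ x ∈ Uni V, ∀ u ∈ S, f (x * u) = f x * e x u) :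
    (S.card : ℂ) * ∑ x ∈ T, f x = ∑ x ∈ T, f x * ∑ u ∈ S, e x u :=
  calc (S.card : ℂ) * ∑ x ∈ T, f x = ∑ u ∈ S, ∑ x ∈ T, f (x * u) := by
        rw [Finset.sum_congr rfl fun u hu => hT.sum_mul_right hk hf (hS u hu),
          Finset.sum_const, nsmul_eq_mul]
    _ = ∑ x ∈ T, ∑ u ∈ S, f (x * u) := Finset.sum_comm
    _ = ∑ x ∈ T, f x * ∑ u ∈ S, e x u := by
        refine Finset.sum_congr rfl fun x hx => ?_
        rw [Finset.mul_sum]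
        exact Finset.sum_congr rfl fun u hu => he x (hT.1 x hx) u hu

open Classical in
theorem sum_addChar_eq_zero (hT : UnitReps V k T) {m : ℤ} (hm : 1 ≤ m) (hmk : m ≤ k)
    (hkm : k ≤ m + m) {ψ : F → ℂ} (hψ : ∀ x y, ψ (x + y) = ψ x * ψ y) {z y₀ : F}
    (hz : ∀ y ∈ Pid V k, ψ (z * y) = 1) (hy₀ : y₀ ∈ Pid V m) (hψy₀ : ψ (z * y₀) ≠ 1) :
    ∑ u ∈ T with u - 1 ∈ Pid V m, ψ (z * (u - 1)) = 0 := by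
  have hsplit : ∀ x w, ψ (z * (x * w - 1)) = ψ (z * (x - 1)) * ψ (z * (x * (w - 1))) := by
    intro x w
    rw [← hψ]
    ring_nf
  have hw : 1 + y₀ - 1 ∈ Pid V m := by simpa using hy₀
  rw [Finset.sum_filter]
  -- `u ↦ ψ (z * (u - 1))` is a character of `U^m/U^k` (as `k ≤ 2m`), nontrivial at `1 + y₀`.
  refine hT.sum_eq_zero_of_apply_mul (by omega) ?_ (Uni.of_sub_one_mem hm hw) hψy₀ ?_
  · intro x hx v hv
    rw [Pid.mul_sub_one_mem_iff hx (Pid.anti hmk hv), hsplit,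
      hz _ (Pid.unit_mul_mem hx hv), mul_one]
  · intro x hx
    rw [Pid.mul_sub_one_mem_iff hx hw]
    split_ifs with hx1
    · have hxy₀ : (x - 1) * y₀ ∈ Pid V k := Pid.anti hkm (Pid.mul_mem hx1 hy₀)
      rw [hsplit, mul_comm, show z * (x * (1 + y₀ - 1)) = z * y₀ + z * ((x - 1) * y₀) by ring,
        hψ, hz _ hxy₀, mul_one]
    · rw [mul_zero]

theorem sum_eq_zero_of_twist (hT : UnitReps V k T) {ψ : F → ℂ} {n : ℤ}
    (hψ : ∀ x y, ψ (x + y) = ψ x * ψ y) (hn : IsAddConductor V ψ n) {c : F} (hc : c ≠ 0)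
    (hνc : V.ν c = k + n) {f : F → ℂ} (hf0 : ∀ x ∈ Uni V, x - 1 ∈ Pid V (k / 2) → f x = 0)
    (hf : ∀ x ∈ Uni V, ∀ u ∈ Uni V, u - 1 ∈ Pid V (k - k / 2) →
      f (x * u) = f x * ψ (c⁻¹ * (x - 1) * (u - 1))) :
    ∑ x ∈ T, f x = 0 := by
  classical
  rcases le_or_gt k 0 with hk | hk
  · exact Finset.sum_eq_zero fun x hx =>
      hf0 x (hT.1 x hx) (Pid.anti (by omega) (Uni.sub_one_mem (hT.1 x hx)))
  have hψk : ∀ x ∈ Uni V, ∀ y ∈ Pid V k, ψ (c⁻¹ * (x - 1) * y) = 1 := by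
    intro x hx y hy
    have h := Pid.mul_mem (Pid.mul_mem (Pid.self_mem c⁻¹) (Uni.sub_one_mem hx)) hy
    rw [V.ν_inv hc, hνc] at h
    exact hn.1 _ (Pid.anti (by omega) h)
  have hf_inv : ∀ x ∈ Uni V, ∀ v, v - 1 ∈ Pid V k → f (x * v) = f x := fun x hx v hv => by
    rw [hf x hx v (Uni.of_sub_one_mem hk hv) (Pid.anti (by omega) hv), hψk x hx _ hv, mul_one]
  set S := T.filter (· - 1 ∈ Pid V (k - k / 2))
  have hS : S.Nonempty := by
    obtain ⟨t, ⟨htT, ht⟩, -⟩ := hT.2 1 Uni.one_mem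
    refine ⟨t, Finset.mem_filter.2 ⟨htT, Pid.anti (l := k) (by omega) ?_⟩⟩
    simpa using Pid.inv_sub_one_mem hk ht
  have key := hT.card_mul_sum hk hf_inv (S := S)
    (fun u hu => Uni.of_sub_one_mem (by omega) (Finset.mem_filter.1 hu).2)
    (fun x hx u hu => hf x hx u (Uni.of_sub_one_mem (by omega) (Finset.mem_filter.1 hu).2)
      (Finset.mem_filter.1 hu).2)
  suffices hterm : ∀ x ∈ T, f x * ∑ u ∈ S, ψ (c⁻¹ * (x - 1) * (u - 1)) = 0 by
    rw [Finset.sum_eq_zero hterm] at key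
    exact (mul_eq_zero.1 key).resolve_left (Nat.cast_ne_zero.2 hS.card_pos.ne')
  intro x hx
  by_cases hx1 : x - 1 ∈ Pid V (k / 2)
  · rw [hf0 x (hT.1 x hx) hx1, zero_mul]
  have hx10 : x - 1 ≠ 0 := fun h => hx1 (h ▸ Pid.zero_mem _)
  have hz : c⁻¹ * (x - 1) ≠ 0 := mul_ne_zero (inv_ne_zero hc) hx10
  obtain ⟨y₀, hy₀, hψy₀⟩ := hn.exists_mul_ne_one hz
  rw [V.hmul _ _ (inv_ne_zero hc) hx10, V.ν_inv hc, hνc] at hy₀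
  have hνx : V.ν (x - 1) < k / 2 := lt_of_not_ge fun h => hx1 (Or.inr h)
  rw [hT.sum_addChar_eq_zero (by omega) (by omega) (by omega) hψ (hψk x (hT.1 x hx))
    (Pid.anti (by omega) hy₀) hψy₀, mul_zero]

end UnitReps

noncomputable def tateTermDiff (α β ψ : F → ℂ) (c x : F) : ℂ :=
  (α x)⁻¹ * ((β x)⁻¹ - 1) * ψ (c⁻¹ * x)

theorem tateTermDiff_mul {α β ψ : F → ℂ} (hα : IsMulChar α)
    (hβ : IsMulChar β) (hψ : ∀ x y, ψ (x + y) = ψ x * ψ y) (hψ0 : ∀ x, ψ x ≠ 0) {c x u : F}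
    (hx : x ≠ 0) (hu : u ≠ 0) (hαu : α u = ψ (c⁻¹ * (u - 1))) (hβu : β u = 1) :
    tateTermDiff α β ψ c (x * u) = tateTermDiff α β ψ c x * ψ (c⁻¹ * (x - 1) * (u - 1)) := by
  unfold tateTermDiff
  have hψxu : ψ (c⁻¹ * (x * u)) =
      ψ (c⁻¹ * x) * ψ (c⁻¹ * (u - 1)) * ψ (c⁻¹ * (x - 1) * (u - 1)) := by
    rw [← hψ, ← hψ]
    ring_nf
  rw [hα.2 x u hx hu, hβ.2 x u hx hu, hαu, hβu, hψxu, mul_one]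
  have hP := hψ0 (c⁻¹ * (u - 1))
  generalize ψ (c⁻¹ * (u - 1)) = P at hP ⊢
  field_simp

theorem stmt7_general (V : VData F) (α β ψ : F → ℂ) (aα aβ n : ℤ) (c : F) (T : Finset F)
    (hα : IsMulChar α) (hβ : IsMulChar β)
    (haβ : IsMulConductor V β aβ)
    (hge : 2 * aβ ≤ aα)
    (hψ : IsAddChar ψ) (hn : IsAddConductor V ψ n)
    (hc : c ≠ 0) (hνc : V.ν c = aα + n)
    (hcα : ∀ x : F, x ≠ 0 → aα ≤ 2 * V.ν x → α (1 + x) = ψ (x / c))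
    (hT : UnitReps V aα T) :
    α c * β c * (((V.q : ℝ) ^ (-(aα : ℝ) / 2) : ℝ) : ℂ) *
        ∑ x ∈ T, (α x * β x)⁻¹ * ψ (c⁻¹ * x) =
      β c * (α c * (((V.q : ℝ) ^ (-(aα : ℝ) / 2) : ℝ) : ℂ) *
        ∑ x ∈ T, (α x)⁻¹ * ψ (c⁻¹ * x)) := by
  obtain ⟨hψadd, -⟩ := hψ
  suffices h : ∑ x ∈ T, tateTermDiff α β ψ c x = 0 by
    have hsum : ∑ x ∈ T, (α x * β x)⁻¹ * ψ (c⁻¹ * x) = ∑ x ∈ T, (α x)⁻¹ * ψ (c⁻¹ * x) := by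
      rw [← sub_eq_zero, ← Finset.sum_sub_distrib, ← h]
      exact Finset.sum_congr rfl fun x _ => by rw [tateTermDiff, mul_inv]; ring
    rw [hsum]
    ring
  have hαU : ∀ u, u - 1 ∈ Pid V (aα - aα / 2) → α u = ψ (c⁻¹ * (u - 1)) := by
    intro u hu
    by_cases hu0 : u - 1 = 0
    · rw [sub_eq_zero.mp hu0, hα.map_one, sub_self, mul_zero, hn.apply_zero]
    have h := hcα (u - 1) hu0 (by have := hu.resolve_left hu0; omega)
    rwa [add_sub_cancel, div_eq_inv_mul] at h
  have hβU : ∀ u ∈ Uni V, u - 1 ∈ Pid V (aα / 2) → β u = 1 :=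
    fun u hu hu1 => haβ.apply_eq_one hu (Pid.anti (by omega) hu1)
  refine hT.sum_eq_zero_of_twist hψadd hn hc hνc (fun x hx hx1 => by simp [tateTermDiff, hβU x hx hx1]) ?_
  intro x hx u hu hu1
  exact tateTermDiff_mul hα hβ hψadd (hn.apply_ne_zero hψadd) hx.1 hu.1
    (hαU u hu1) (hβU u hu (Pid.anti (by omega) hu1))

/-- Deligne's twisting formula: if `a(α) ≥ 2a(β)` then
`ε(αβ,ψ) = β(c)·ε(α,ψ)`, both epsilon factors given by Tate's sum formula
(note `a(αβ) = a(α)`). -/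
theorem stmt7 (V : VData F) (α β ψ : F → ℂ) (aα aβ n : ℤ) (c : F) (T : Finset F)
    (hα : IsMulChar α) (hβ : IsMulChar β)
    (haα : IsMulConductor V α aα) (haβ : IsMulConductor V β aβ)
    (hge : 2 * aβ ≤ aα)
    (hψ : IsAddChar ψ) (hn : IsAddConductor V ψ n)
    (hc : c ≠ 0) (hνc : V.ν c = aα + n)
    (hcα : ∀ x : F, x ≠ 0 → aα ≤ 2 * V.ν x → α (1 + x) = ψ (x / c))
    (hT : UnitReps V aα T) :
    α c * β c * (((V.q : ℝ) ^ (-(aα : ℝ) / 2) : ℝ) : ℂ) *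
        ∑ x ∈ T, (α x * β x)⁻¹ * ψ (c⁻¹ * x) =
      β c * (α c * (((V.q : ℝ) ^ (-(aα : ℝ) / 2) : ℝ) : ℂ) *
        ∑ x ∈ T, (α x)⁻¹ * ψ (c⁻¹ * x)) :=
  stmt7_general V α β ψ aα aβ n c T hα hβ haβ hge hψ hn hc hνc hcα hT
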